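/- arXiv:nlin/0312021 — 4 statements merged into one kernel-verified Lean document; each statement's English description precedes it below -/
import Mathlib

section
/- For unit vectors n, r ∈ ℝ³ and ε ∈ [0,1], the matrix identity P(n,ε) P(r) P(n,ε) = λ(ε,n,r) P(r') holds, where λ(ε,n,r) = (1 + ε² + 2ε(n·r))/4 and r' = ((1-ε²)r + 2ε(1 + ε(n·r))n) / (1 + ε² + 2ε(n·r)), provided λ(ε,n,r) > 0. -/
/-! The Pauli matrices anticommute, `σ(a)σ(b) + σ(b)σ(a) = 2(a·b)`, hence
`σ(n)σ(r)σ(n) = 2(n·r)σ(n) - (n·n)σ(r)`. Expanding `(1 + εσ(n))(1 + σ(r))(1 + εσ(n))` with these rules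
gives `(1 + ε² + 2ε(n·r)) + σ((1 - ε²)r + 2ε(1 + ε(n·r))n)` for a unit vector `n`, and pulling out the
nonzero scalar `4λ` leaves `1 + σ(r')`. -/

open Matrix

noncomputable section

/-- Pauli matrix σ₁. -/
def pauli1 : Matrix (Fin 2) (Fin 2) ℂ := !![0, 1; 1, 0]
/-- Pauli matrix σ₂. -/
def pauli2 : Matrix (Fin 2) (Fin 2) ℂ := !![0, -Complex.I; Complex.I, 0]
/-- Pauli matrix σ₃. -/
def pauli3 : Matrix (Fin 2) (Fin 2) ℂ := !![1, 0; 0, -1]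

/-- σ(v) = v₁σ₁ + v₂σ₂ + v₃σ₃ for v ∈ ℝ³. -/
def pauliVec (v : Fin 3 → ℝ) : Matrix (Fin 2) (Fin 2) ℂ :=
  (v 0 : ℂ) • pauli1 + (v 1 : ℂ) • pauli2 + (v 2 : ℂ) • pauli3

/-- Euclidean dot product on ℝ³. -/
def dot3 (a b : Fin 3 → ℝ) : ℝ := a 0 * b 0 + a 1 * b 1 + a 2 * b 2

/-- v is a unit vector of ℝ³. -/
def IsUnitVec (v : Fin 3 → ℝ) : Prop := dot3 v v = 1

/-- P(n,ε) = (I + ε σ(n))/2. -/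
def Pmat (n : Fin 3 → ℝ) (ε : ℝ) : Matrix (Fin 2) (Fin 2) ℂ :=
  ((1 : ℂ)/2) • (1 + (ε : ℂ) • pauliVec n)

/-- λ(ε,n,r) = (1 + ε² + 2ε(n·r))/4. -/
def lam (ε : ℝ) (n r : Fin 3 → ℝ) : ℝ := (1 + ε^2 + 2*ε*(dot3 n r))/4

/-- The map w(r) = ((1-ε²)r + 2ε(1+ε(n·r))n)/(1+ε²+2ε(n·r)). -/
def wmap (ε : ℝ) (n r : Fin 3 → ℝ) : Fin 3 → ℝ :=
  fun i => ((1 - ε^2) * r i + 2*ε*(1 + ε*(dot3 n r)) * n i) / (1 + ε^2 + 2*ε*(dot3 n r))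

lemma pauliVec_add (v w : Fin 3 → ℝ) : pauliVec (v + w) = pauliVec v + pauliVec w := by
  simp only [pauliVec, Pi.add_apply, Complex.ofReal_add, add_smul]
  abel

lemma pauliVec_smul (c : ℝ) (v : Fin 3 → ℝ) : pauliVec (c • v) = (c : ℂ) • pauliVec v := by
  simp only [pauliVec, Pi.smul_apply, smul_eq_mul, Complex.ofReal_mul, smul_add, mul_smul]

lemma pauliVec_mul_add_mul_comm (a b : Fin 3 → ℝ) :
    pauliVec a * pauliVec b + pauliVec b * pauliVec a = (2 * dot3 a b : ℂ) • 1 := by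
  ext i j
  fin_cases i <;> fin_cases j <;>
    simp [pauliVec, pauli1, pauli2, pauli3, dot3] <;>
    ring_nf <;> simp only [Complex.I_sq] <;> ring

lemma pauliVec_mul_self (v : Fin 3 → ℝ) : pauliVec v * pauliVec v = (dot3 v v : ℂ) • 1 := by
  have h := pauliVec_mul_add_mul_comm v v
  rw [← two_smul ℂ, mul_smul] at h
  exact smul_right_injective _ two_ne_zero h

lemma pauliVec_mul_mul_self (a b : Fin 3 → ℝ) :
    pauliVec a * pauliVec b * pauliVec a =
      (2 * dot3 a b : ℂ) • pauliVec a - (dot3 a a : ℂ) • pauliVec b := by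
  rw [← smul_one_mul, ← pauliVec_mul_add_mul_comm, ← mul_smul_one, ← pauliVec_mul_self]
  noncomm_ring

lemma Pmat_mul_Pmat_one_mul_Pmat (n r : Fin 3 → ℝ) (ε : ℝ) :
    Pmat n ε * Pmat r 1 * Pmat n ε =
      ((1 : ℂ) / 8) • (((1 + ε ^ 2 * dot3 n n + 2 * ε * dot3 n r : ℝ) : ℂ) • 1 +
        pauliVec ((1 - ε ^ 2 * dot3 n n) • r + (2 * ε * (1 + ε * dot3 n r)) • n)) := by
  have hNN := pauliVec_mul_self n
  have hNRN := pauliVec_mul_mul_self n r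
  have hanti := pauliVec_mul_add_mul_comm n r
  simp only [Pmat, Complex.ofReal_one, one_smul, pauliVec_add, pauliVec_smul]
  simp only [mul_add, add_mul, smul_mul_assoc, mul_smul_comm, one_mul, mul_one, smul_add]
  rw [hNN, hNRN]
  push_cast
  linear_combination (norm := module) ((ε : ℂ) / 8) • hanti

lemma smul_Pmat_inv_smul_one {c : ℝ} (hc : c ≠ 0) (v : Fin 3 → ℝ) :
    (c : ℂ) • Pmat (c⁻¹ • v) 1 = (1 / 2 : ℂ) • ((c : ℂ) • 1 + pauliVec v) := by
  rw [Pmat, pauliVec_smul, Complex.ofReal_one, one_smul, smul_comm, smul_add, smul_smul,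
    Complex.ofReal_inv, mul_inv_cancel₀ (Complex.ofReal_ne_zero.2 hc), one_smul]

theorem stmt2_general (n r : Fin 3 → ℝ) (hn : IsUnitVec n)
    (ε : ℝ) (hlam : 0 < lam ε n r) :
    Pmat n ε * Pmat r 1 * Pmat n ε = (lam ε n r : ℂ) • Pmat (wmap ε n r) 1 := by
  set D := 1 + ε ^ 2 + 2 * ε * dot3 n r
  have hlamD : lam ε n r = D / 4 := rfl
  have hD : 0 < D := by rw [hlamD] at hlam; linarith
  set v := (1 - ε ^ 2) • r + (2 * ε * (1 + ε * dot3 n r)) • n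
  have hw : wmap ε n r = D⁻¹ • v := by
    ext i
    simp only [wmap, v, D, Pi.smul_apply, Pi.add_apply, smul_eq_mul]
    ring
  calc Pmat n ε * Pmat r 1 * Pmat n ε = (1 / 8 : ℂ) • ((D : ℂ) • 1 + pauliVec v) := by
        rw [Pmat_mul_Pmat_one_mul_Pmat, show dot3 n n = 1 from hn, mul_one]
    _ = ((1 / 4 : ℝ) : ℂ) • (D : ℂ) • Pmat (D⁻¹ • v) 1 := by
        rw [smul_Pmat_inv_smul_one hD.ne', smul_smul]
        norm_num
    _ = (lam ε n r : ℂ) • Pmat (wmap ε n r) 1 := by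
        rw [smul_smul, ← Complex.ofReal_mul, one_div_mul_eq_div, hw, hlamD]

/-- P(n,ε) P(r) P(n,ε) = λ(ε,n,r) P(r'). -/
theorem stmt2 (n r : Fin 3 → ℝ) (hn : IsUnitVec n) (hr : IsUnitVec r)
    (ε : ℝ) (hε : ε ∈ Set.Icc (0:ℝ) 1) (hlam : 0 < lam ε n r) :
    Pmat n ε * Pmat r 1 * Pmat n ε = (lam ε n r : ℂ) • Pmat (wmap ε n r) 1 :=
  stmt2_general n r hn ε hlam
end
end

section
/- For unit vectors n, r ∈ ℝ³ and ε ∈ [0,1) with 1 + ε² + 2ε(n·r) > 0, the vector r' = ((1-ε²)r + 2ε(1 + ε(n·r))n) / (1 + ε² + 2ε(n·r)) is a unit vector in ℝ³. -/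
open Matrix

noncomputable section

/-!
Expanding with ‖n‖ = ‖r‖ = 1, the numerator (1 - ε²) r + 2ε(1 + ε⟪n, r⟫) n has squared norm
(1 + ε² + 2ε⟪n, r⟫)², the square of the denominator. This is an identity in any real inner
product space; ℝ³ with `dot3` is identified with `EuclideanSpace ℝ (Fin 3)` via `WithLp.toLp`.
-/

open RealInnerProductSpace

section InnerProductSpace

variable {E : Type*} [NormedAddCommGroup E] [InnerProductSpace ℝ E]

theorem norm_sq_smul_add_smul_of_norm_eq_one {x y : E} (hx : ‖x‖ = 1) (hy : ‖y‖ = 1)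
    (a b : ℝ) : ‖a • x + b • y‖ ^ 2 = a ^ 2 + b ^ 2 + 2 * a * b * ⟪x, y⟫ := by
  rw [norm_add_sq_real, norm_smul, norm_smul, inner_smul_left, inner_smul_right, hx, hy,
    Real.norm_eq_abs, Real.norm_eq_abs, mul_pow, mul_pow, sq_abs, sq_abs]
  simp only [conj_trivial]
  ring

theorem norm_smul_add_smul_eq_abs_of_norm_eq_one {n r : E} (hn : ‖n‖ = 1) (hr : ‖r‖ = 1)
    (ε : ℝ) :
    ‖(1 - ε ^ 2) • r + (2 * ε * (1 + ε * ⟪n, r⟫)) • n‖ = |1 + ε ^ 2 + 2 * ε * ⟪n, r⟫| := by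
  rw [← sq_eq_sq₀ (norm_nonneg _) (abs_nonneg _), sq_abs,
    norm_sq_smul_add_smul_of_norm_eq_one hr hn, real_inner_comm]
  ring

theorem norm_inv_smul_smul_add_smul_eq_one {n r : E} (hn : ‖n‖ = 1) (hr : ‖r‖ = 1) {ε : ℝ}
    (hD : 1 + ε ^ 2 + 2 * ε * ⟪n, r⟫ ≠ 0) :
    ‖(1 + ε ^ 2 + 2 * ε * ⟪n, r⟫)⁻¹ •
      ((1 - ε ^ 2) • r + (2 * ε * (1 + ε * ⟪n, r⟫)) • n)‖ = 1 := by
  rw [norm_smul, norm_smul_add_smul_eq_abs_of_norm_eq_one hn hr, norm_inv, Real.norm_eq_abs,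
    inv_mul_cancel₀ (abs_ne_zero.mpr hD)]

end InnerProductSpace

theorem dot3_eq_inner (a b : Fin 3 → ℝ) :
    dot3 a b = ⟪WithLp.toLp 2 a, WithLp.toLp 2 b⟫ := by
  simp only [dot3, PiLp.inner_apply, RCLike.inner_apply, Real.ringHom_apply, Fin.sum_univ_three]
  ring

theorem isUnitVec_iff_norm_toLp (v : Fin 3 → ℝ) : IsUnitVec v ↔ ‖WithLp.toLp 2 v‖ = 1 := by
  rw [IsUnitVec, dot3_eq_inner, real_inner_self_eq_norm_sq,
    pow_eq_one_iff_of_nonneg (norm_nonneg _) two_ne_zero]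

theorem toLp_wmap (ε : ℝ) (n r : Fin 3 → ℝ) :
    WithLp.toLp 2 (wmap ε n r) =
      (1 + ε ^ 2 + 2 * ε * dot3 n r)⁻¹ •
        ((1 - ε ^ 2) • WithLp.toLp 2 r + (2 * ε * (1 + ε * dot3 n r)) • WithLp.toLp 2 n) := by
  ext i
  simp [wmap, div_eq_inv_mul, mul_add]

theorem stmt3_general (n r : Fin 3 → ℝ) (hn : IsUnitVec n) (hr : IsUnitVec r)
    (ε : ℝ) (hpos : 0 < 1 + ε^2 + 2*ε*(dot3 n r)) :
    IsUnitVec (wmap ε n r) := by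
  rw [isUnitVec_iff_norm_toLp, toLp_wmap, dot3_eq_inner]
  rw [isUnitVec_iff_norm_toLp] at hn hr
  rw [dot3_eq_inner] at hpos
  exact norm_inv_smul_smul_add_smul_eq_one hn hr hpos.ne'

/-- r' = w(r) is a unit vector. -/
theorem stmt3 (n r : Fin 3 → ℝ) (hn : IsUnitVec n) (hr : IsUnitVec r)
    (ε : ℝ) (hε : ε ∈ Set.Ico (0:ℝ) 1) (hpos : 0 < 1 + ε^2 + 2*ε*(dot3 n r)) :
    IsUnitVec (wmap ε n r) :=
  stmt3_general n r hn hr ε hpos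
end
end

section
/- For ε ∈ [0,1) and unit vectors n, r ∈ ℝ³, the map w(r) = ((1-ε²)r + 2ε(1 + ε(n·r))n)/(1 + ε² + 2ε(n·r)) is a bijection of S² with inverse w⁻¹(r) = ((1-ε²)r - 2ε(1 - ε(n·r))n)/(1 + ε² - 2ε(n·r)). -/
open Matrix

noncomputable section

/-- The inverse map w⁻¹. -/
def winv (ε : ℝ) (n r : Fin 3 → ℝ) : Fin 3 → ℝ :=
  fun i => ((1 - ε^2) * r i - 2*ε*(1 - ε*(dot3 n r)) * n i) / (1 + ε^2 - 2*ε*(dot3 n r))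

/-! The key identities are that, with `s = n·r` and `D = 1 + ε² + 2εs`, one has `n·w(r) = (2ε + (1 + ε²)s)/D`
and `1 + ε² - 2ε(n·w(r)) = (1 - ε²)²/D`; so `w⁻¹ ∘ w = id` is a rational identity, and `w⁻¹` is `w` with `ε`
replaced by `-ε`, which gives `w ∘ w⁻¹ = id` by symmetry. For `|ε| < 1` the denominators are at least
`(1 - |ε|)² > 0` on the sphere. -/

section SphereMap

variable {ε : ℝ} {n r : Fin 3 → ℝ}

lemma abs_dot3_le_one (hn : IsUnitVec n) (hr : IsUnitVec r) : |dot3 n r| ≤ 1 := by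
  simp only [IsUnitVec, dot3] at *
  rw [abs_le]
  constructor
  · nlinarith [sq_nonneg (n 0 + r 0), sq_nonneg (n 1 + r 1), sq_nonneg (n 2 + r 2)]
  · nlinarith [sq_nonneg (n 0 - r 0), sq_nonneg (n 1 - r 1), sq_nonneg (n 2 - r 2)]

lemma wmap_denom_pos (hn : IsUnitVec n) (hr : IsUnitVec r) (hε : |ε| < 1) :
    0 < 1 + ε ^ 2 + 2 * ε * dot3 n r := by
  have hprod : |ε * dot3 n r| ≤ |ε| := by
    rw [abs_mul]
    exact mul_le_of_le_one_right (abs_nonneg ε) (abs_dot3_le_one hn hr)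
  have hsq : ε ^ 2 = |ε| ^ 2 := (sq_abs ε).symm
  nlinarith [neg_abs_le (ε * dot3 n r)]

lemma winv_eq_wmap_neg (ε : ℝ) (n : Fin 3 → ℝ) : winv ε n = wmap (-ε) n := by
  funext r i
  simp only [winv, wmap]
  ring

lemma wmap_eq_winv_neg (ε : ℝ) (n : Fin 3 → ℝ) : wmap ε n = winv (-ε) n := by
  rw [winv_eq_wmap_neg, neg_neg]

lemma isUnitVec_wmap (hn : IsUnitVec n) (hr : IsUnitVec r) (hD : 1 + ε ^ 2 + 2 * ε * dot3 n r ≠ 0) :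
    IsUnitVec (wmap ε n r) := by
  unfold IsUnitVec wmap at *
  generalize hs : dot3 n r = s at hD ⊢
  generalize hd : 1 + ε ^ 2 + 2 * ε * s = d at hD ⊢
  simp only [dot3] at hn hr hs ⊢
  field_simp
  linear_combination (1 - ε ^ 2) ^ 2 * hr + (2 * ε * (1 + ε * s)) ^ 2 * hn
    + 4 * ε * (1 - ε ^ 2) * (1 + ε * s) * hs + (d + 1 + ε ^ 2 + 2 * ε * s) * hd

lemma dot3_wmap (hn : IsUnitVec n) (hD : 1 + ε ^ 2 + 2 * ε * dot3 n r ≠ 0) :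
    dot3 n (wmap ε n r) = (2 * ε + (1 + ε ^ 2) * dot3 n r) / (1 + ε ^ 2 + 2 * ε * dot3 n r) := by
  unfold IsUnitVec wmap at *
  generalize hs : dot3 n r = s at hD ⊢
  generalize hd : 1 + ε ^ 2 + 2 * ε * s = d at hD ⊢
  simp only [dot3] at hn hs ⊢
  field_simp
  linear_combination 2 * ε * (1 + ε * s) * hn + (1 - ε ^ 2) * hs

lemma winv_wmap (hn : IsUnitVec n) (hD : 1 + ε ^ 2 + 2 * ε * dot3 n r ≠ 0) (hε : 1 - ε ^ 2 ≠ 0) :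
    winv ε n (wmap ε n r) = r := by
  funext i
  rw [winv, dot3_wmap hn hD]
  unfold wmap
  generalize dot3 n r = s at hD ⊢
  generalize hd : 1 + ε ^ 2 + 2 * ε * s = d at hD ⊢
  have hden : 1 + ε ^ 2 - 2 * ε * ((2 * ε + (1 + ε ^ 2) * s) / d) = (1 - ε ^ 2) ^ 2 / d := by
    field_simp
    linear_combination (-(1 + ε ^ 2)) * hd
  rw [hden]
  field_simp
  linear_combination 2 * ε * n i * hd

lemma mapsTo_wmap (hn : IsUnitVec n) (hε : |ε| < 1) :
    Set.MapsTo (wmap ε n) {v | IsUnitVec v} {v | IsUnitVec v} :=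
  fun _ hr => isUnitVec_wmap hn hr (wmap_denom_pos hn hr hε).ne'

lemma mapsTo_winv (hn : IsUnitVec n) (hε : |ε| < 1) :
    Set.MapsTo (winv ε n) {v | IsUnitVec v} {v | IsUnitVec v} := by
  rw [winv_eq_wmap_neg]
  exact mapsTo_wmap hn (by rwa [abs_neg])

lemma leftInvOn_winv_wmap (hn : IsUnitVec n) (hε : |ε| < 1) :
    Set.LeftInvOn (winv ε n) (wmap ε n) {v | IsUnitVec v} := by
  have hε2 : 1 - ε ^ 2 ≠ 0 := by
    rw [← sq_abs]
    nlinarith [abs_nonneg ε]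
  exact fun _ hr => winv_wmap hn (wmap_denom_pos hn hr hε).ne' hε2

lemma invOn_winv_wmap (hn : IsUnitVec n) (hε : |ε| < 1) :
    Set.InvOn (winv ε n) (wmap ε n) {v | IsUnitVec v} {v | IsUnitVec v} := by
  refine ⟨leftInvOn_winv_wmap hn hε, ?_⟩
  have h := leftInvOn_winv_wmap (ε := -ε) hn (by rwa [abs_neg])
  rwa [← wmap_eq_winv_neg, ← winv_eq_wmap_neg] at h

end SphereMap

/-- w is a bijection of S² with inverse w⁻¹. -/
theorem stmt6 (n : Fin 3 → ℝ) (hn : IsUnitVec n) (ε : ℝ) (hε : ε ∈ Set.Ico (0:ℝ) 1) :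
    Set.BijOn (wmap ε n) {v | IsUnitVec v} {v | IsUnitVec v} ∧
    (∀ r : Fin 3 → ℝ, IsUnitVec r →
      winv ε n (wmap ε n r) = r ∧ wmap ε n (winv ε n r) = r) := by
  have hε' : |ε| < 1 := abs_lt.2 ⟨by linarith [hε.1], hε.2⟩
  have hinv := invOn_winv_wmap hn hε'
  exact ⟨hinv.bijOn (mapsTo_wmap hn hε') (mapsTo_winv hn hε'), fun r hr => ⟨hinv.1 hr, hinv.2 hr⟩⟩
end
end

section
/- The map A ↦ Λ(A), with Λ(A)^μ_ν = (1/2) Tr(σ_μ A σ_ν A*), is a group homomorphism from SL(2,ℂ) to the 4×4 real matrices: Λ(AB) = Λ(A)Λ(B) for all A, B ∈ SL(2,ℂ). -/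
open Matrix

noncomputable section

/-- σ_μ for μ = 0,1,2,3 (σ₀ = I). -/
def pauli4 : Fin 4 → Matrix (Fin 2) (Fin 2) ℂ :=
  ![1, pauli1, pauli2, pauli3]

/-- Λ(A)^μ_ν = (1/2) Tr(σ_μ A σ_ν A*). -/
def LorentzOf (A : Matrix (Fin 2) (Fin 2) ℂ) : Matrix (Fin 4) (Fin 4) ℝ :=
  fun μ ν => (((1:ℂ)/2) * (pauli4 μ * A * pauli4 ν * Aᴴ).trace).re

/-- The Minkowski metric η = diag(-1,1,1,1). -/
def eta : Matrix (Fin 4) (Fin 4) ℝ := Matrix.diagonal ![-1, 1, 1, 1]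

set_option maxHeartbeats 2000000 in
/-- A ↦ Λ(A) is multiplicative on SL(2,ℂ). -/
theorem stmt9 (A B : Matrix (Fin 2) (Fin 2) ℂ) (hA : A.det = 1) (hB : B.det = 1) :
    LorentzOf (A * B) = LorentzOf A * LorentzOf B := by
  ext μ ν
  fin_cases μ <;> fin_cases ν <;>
  · simp only [LorentzOf, Matrix.mul_apply, pauli4, pauli1, pauli2, pauli3,
      Matrix.trace, Matrix.diag, Fin.sum_univ_succ, Fin.sum_univ_zero,
      Matrix.conjTranspose_apply, Matrix.cons_val_zero, Matrix.cons_val_one, Matrix.head_cons,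
      Matrix.one_apply, Matrix.cons_val', Matrix.head_fin_const, Matrix.empty_val',
      Matrix.cons_val_fin_one]
    simp [Complex.ext_iff, Complex.add_re, Complex.mul_re, Complex.mul_im, Complex.add_im]
    ring
end
end
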